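/- Let μ_y, q₁, V, C be real numbers with V > 0 and q₁ V − C² > 0. Then the global minimum value of the function h(m₁₁, m₁₂) = μ_y² + m₁₁² q₁ + m₁₂² V − 2 m₁₁ m₁₂ C − 2 m₁₁ μ_y² over ℝ² equals μ_y² − μ_y⁴ V / (q₁ V − C²); that is, this value is attained and h(m₁₁, m₁₂) ≥ μ_y² − μ_y⁴ V / (q₁ V − C²) for all real m₁₁, m₁₂. -/

import Mathlib

/-- The first-order MSE of the proposed class of estimators `t_p` as a function of
`m₁₁, m₁₂`: `h(m₁₁, m₁₂) = μ_y² + m₁₁² q₁ + m₁₂² V − 2 m₁₁ m₁₂ C − 2 m₁₁ μ_y²`. -/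
def mseTp (μy q₁ V C m₁₁ m₁₂ : ℝ) : ℝ :=
  μy ^ 2 + m₁₁ ^ 2 * q₁ + m₁₂ ^ 2 * V - 2 * m₁₁ * m₁₂ * C - 2 * m₁₁ * μy ^ 2

/-!
Complete the square twice: first in `m₁₂`, which leaves `(q₁ V − C²) m₁₁² / V − 2 m₁₁ μ_y²`,
then in `m₁₁`. Both squares vanish at `m₁₁ = μ_y² V / (q₁ V − C²)`, `m₁₂ = μ_y² C / (q₁ V − C²)`.
-/

theorem mseTp_eq_sub_add_sq (μy q₁ V C m₁₁ m₁₂ : ℝ) (hV : V ≠ 0) (hD : q₁ * V - C ^ 2 ≠ 0) :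
    mseTp μy q₁ V C m₁₁ m₁₂ = μy ^ 2 - μy ^ 4 * V / (q₁ * V - C ^ 2) +
      ((V * m₁₂ - C * m₁₁) ^ 2 +
        ((q₁ * V - C ^ 2) * m₁₁ - μy ^ 2 * V) ^ 2 / (q₁ * V - C ^ 2)) / V := by
  unfold mseTp
  field_simp
  ring

/-- with `V > 0` and `q₁ V − C² > 0`, the global minimum value of
`h(m₁₁, m₁₂) = μ_y² + m₁₁² q₁ + m₁₂² V − 2 m₁₁ m₁₂ C − 2 m₁₁ μ_y²` over `ℝ²` equals
`μ_y² − μ_y⁴ V / (q₁ V − C²)`, and it is attained. -/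
theorem mseTp_min_value (μy q₁ V C : ℝ) (hV : 0 < V)
    (hD : 0 < q₁ * V - C ^ 2) :
    IsLeast (Set.range fun p : ℝ × ℝ => mseTp μy q₁ V C p.1 p.2)
      (μy ^ 2 - μy ^ 4 * V / (q₁ * V - C ^ 2)) := by
  set D := q₁ * V - C ^ 2
  refine ⟨⟨(μy ^ 2 * V / D, μy ^ 2 * C / D), ?_⟩, ?_⟩
  · have h₁₂ : V * (μy ^ 2 * C / D) - C * (μy ^ 2 * V / D) = 0 := by ring
    have h₁₁ : D * (μy ^ 2 * V / D) - μy ^ 2 * V = 0 := by rw [mul_div_cancel₀ _ hD.ne', sub_self]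
    dsimp only
    rw [mseTp_eq_sub_add_sq _ _ _ _ _ _ hV.ne' hD.ne', h₁₂, h₁₁]
    simp [D]
  · rintro _ ⟨⟨m₁₁, m₁₂⟩, rfl⟩
    dsimp only
    rw [mseTp_eq_sub_add_sq _ _ _ _ _ _ hV.ne' hD.ne']
    exact le_add_of_nonneg_right (by positivity)
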